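/- arXiv:1609.00325 — 9 statements merged into one kernel-verified Lean document; each statement's English description precedes it below -/
import Mathlib

section
/- In the one-relator group ⟨x, y | x y x⁻¹ y x y⁻¹ = 1⟩, the element (y^{k+1})⁻¹ · (x y x⁻¹ y^{k+1} x y^{-(k+2)}) · y^{k+1} equals y^{-(k+1)} x^{-k}; equivalently, in the free group F(x,y), the word Y^{k+1} · (x y X y^{k+1} x Y^{k+2}) · y^{k+1} · x^k y^{k+1} lies in the normal closure of x y X y x Y. -/
abbrev F₂ : Type := FreeGroup (Fin 2)

noncomputable def x : F₂ := FreeGroup.of 0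
noncomputable def y : F₂ := FreeGroup.of 1

lemma aux_group {G : Type*} [Group G] (a b : G)
    (hr : a * b * a⁻¹ * b * a * b⁻¹ = 1) (k : ℕ) :
    (b ^ (k + 1))⁻¹ * (a * b * a⁻¹ * b ^ (k + 1) * a * (b⁻¹) ^ (k + 2)) *
        b ^ (k + 1) * ((b⁻¹) ^ (k + 1) * (a⁻¹) ^ k)⁻¹ = 1 := by
  have key2 : a * b * a⁻¹ = b * a⁻¹ * b⁻¹ := by
    have : b * a⁻¹ * b⁻¹ = (a * b * a⁻¹) * (b * a * b⁻¹) * (b * a⁻¹ * b⁻¹) := by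
      rw [show (a * b * a⁻¹) * (b * a * b⁻¹) = a * b * a⁻¹ * b * a * b⁻¹ by group, hr,
        one_mul]
    rw [this]; group
  have key : a⁻¹ * b * a = b⁻¹ * a⁻¹ * b := by
    have : b⁻¹ * a⁻¹ * b = b⁻¹ * a⁻¹ * (a * b * a⁻¹ * b * a * b⁻¹) * b := by
      rw [hr]; group
    rw [this]; group
  have pk : a⁻¹ * b ^ k * a = b⁻¹ * (a⁻¹) ^ k * b := by
    calc a⁻¹ * b ^ k * a = (a⁻¹ * b * (a⁻¹)⁻¹) ^ k := by rw [conj_pow, inv_inv]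
    _ = (b⁻¹ * a⁻¹ * (b⁻¹)⁻¹) ^ k := by rw [inv_inv, key]; group
    _ = b⁻¹ * (a⁻¹) ^ k * b := by rw [show (b⁻¹ * a⁻¹ * (b⁻¹)⁻¹) ^ k = b⁻¹ * (a⁻¹) ^ k * (b⁻¹)⁻¹ from conj_pow, inv_inv]
  calc (b ^ (k + 1))⁻¹ * (a * b * a⁻¹ * b ^ (k + 1) * a * (b⁻¹) ^ (k + 2)) *
        b ^ (k + 1) * ((b⁻¹) ^ (k + 1) * (a⁻¹) ^ k)⁻¹
      = (b ^ (k + 1))⁻¹ * ((b * a⁻¹ * b⁻¹) * b ^ (k + 1) * a * (b⁻¹) ^ (k + 2)) *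
        b ^ (k + 1) * ((b⁻¹) ^ (k + 1) * (a⁻¹) ^ k)⁻¹ := by rw [key2]
    _ = (b ^ k)⁻¹ * (a⁻¹ * b ^ k * a) * (b⁻¹ * a ^ k * b ^ (k + 1)) := by group
    _ = (b ^ k)⁻¹ * (b⁻¹ * (a⁻¹) ^ k * b) * (b⁻¹ * a ^ k * b ^ (k + 1)) := by rw [pk]
    _ = 1 := by group

/-- c⁻¹ u c (u')⁻¹ ∈ ⟨⟨x y x⁻¹ y x y⁻¹⟩⟩ where c = y^{k+1},
u = x y x⁻¹ y^{k+1} x y⁻^{k+2}, u' = y⁻^{k+1} x⁻^k, for k ≥ 1. -/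
theorem stmt_4 (k : ℕ) (hk : 1 ≤ k) :
    (y ^ (k + 1))⁻¹ * (x * y * x⁻¹ * y ^ (k + 1) * x * (y⁻¹) ^ (k + 2)) *
        y ^ (k + 1) * ((y⁻¹) ^ (k + 1) * (x⁻¹) ^ k)⁻¹ ∈
      Subgroup.normalClosure ({x * y * x⁻¹ * y * x * y⁻¹} : Set F₂) := by
  set N := Subgroup.normalClosure ({x * y * x⁻¹ * y * x * y⁻¹} : Set F₂)
  have hN : N.Normal := Subgroup.normalClosure_normal
  rw [← QuotientGroup.eq_one_iff (N := N)]
  let a : F₂ ⧸ N := ((x : F₂) : F₂ ⧸ N)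
  let b : F₂ ⧸ N := ((y : F₂) : F₂ ⧸ N)
  have hr : a * b * a⁻¹ * b * a * b⁻¹ = 1 := by
    show ((x * y * x⁻¹ * y * x * y⁻¹ : F₂) : F₂ ⧸ N) = 1
    rw [QuotientGroup.eq_one_iff]
    exact Subgroup.subset_normalClosure rfl
  have := aux_group a b hr k
  push_cast
  convert this using 2 <;> push_cast <;> rfl
end

section
/- In the free group F(x,y), the element c⁻¹ · u · c · (u')⁻¹, where c = y^{k+2} x⁻¹ y x y⁻¹, u = x y x⁻¹ y x y⁻¹ y⁻¹ x⁻¹ y, and u' = x y x⁻¹ y x y⁻¹, lies in the normal closure of v = x y x⁻¹ y^{k+1} x y^{-(k+2)}, for every integer k ≥ 1. -/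
/-- c⁻¹ u c (u')⁻¹ ∈ ⟨⟨x y x⁻¹ y^{k+1} x y⁻^{k+2}⟩⟩ where
c = y^{k+2} x⁻¹ y x y⁻¹, u = x y x⁻¹ y x y⁻¹ y⁻¹ x⁻¹ y, u' = x y x⁻¹ y x y⁻¹,
for k ≥ 1. -/
theorem stmt_5 (k : ℕ) (hk : 1 ≤ k) :
    (y ^ (k + 2) * x⁻¹ * y * x * y⁻¹)⁻¹ *
        (x * y * x⁻¹ * y * x * y⁻¹ * y⁻¹ * x⁻¹ * y) *
        (y ^ (k + 2) * x⁻¹ * y * x * y⁻¹) *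
        (x * y * x⁻¹ * y * x * y⁻¹)⁻¹ ∈
      Subgroup.normalClosure
        ({x * y * x⁻¹ * y ^ (k + 1) * x * (y⁻¹) ^ (k + 2)} : Set F₂) := by
  have hv : (x * y * x⁻¹ * y ^ (k + 1) * x * (y⁻¹) ^ (k + 2)) ∈
      Subgroup.normalClosure
        ({x * y * x⁻¹ * y ^ (k + 1) * x * (y⁻¹) ^ (k + 2)} : Set F₂) :=
    Subgroup.subset_normalClosure rfl
  have hN : (Subgroup.normalClosure
      ({x * y * x⁻¹ * y ^ (k + 1) * x * (y⁻¹) ^ (k + 2)} : Set F₂)).Normal :=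
    Subgroup.normalClosure_normal
  have key : (y ^ (k + 2) * x⁻¹ * y * x * y⁻¹)⁻¹ *
        (x * y * x⁻¹ * y * x * y⁻¹ * y⁻¹ * x⁻¹ * y) *
        (y ^ (k + 2) * x⁻¹ * y * x * y⁻¹) *
        (x * y * x⁻¹ * y * x * y⁻¹)⁻¹ =
      ((y * x⁻¹ * (y⁻¹) ^ (k + 2) * x * y⁻¹ * x⁻¹) *
          (x * y * x⁻¹ * y ^ (k + 1) * x * (y⁻¹) ^ (k + 2)) *
          (y * x⁻¹ * (y⁻¹) ^ (k + 2) * x * y⁻¹ * x⁻¹)⁻¹) *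
      (((y⁻¹) ^ (k + 1)) *
          (x * y * x⁻¹ * y ^ (k + 1) * x * (y⁻¹) ^ (k + 2))⁻¹ *
          ((y⁻¹) ^ (k + 1))⁻¹) *
      ((x * (y⁻¹) ^ (k + 2)) *
          (x * y * x⁻¹ * y ^ (k + 1) * x * (y⁻¹) ^ (k + 2))⁻¹ *
          (x * (y⁻¹) ^ (k + 2))⁻¹) := by
    group
  rw [key]
  exact mul_mem (mul_mem (hN.conj_mem _ hv _) (hN.conj_mem _ (inv_mem hv) _))
    (hN.conj_mem _ (inv_mem hv) _)
end

section
/- In the free group F(x,y), the element c⁻¹ · u · c · (u')⁻¹, where c = x y x⁻¹ y, u = x y x⁻¹ y^k x⁻¹ y^{-k}, and u' = y^{k+2} x⁻¹ y^{-(k+1)} x y⁻¹ x⁻¹, lies in the normal closure of v = x y x⁻¹ y x y⁻¹ y⁻¹ x⁻¹ y, for every integer k ≥ 1. -/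
theorem key_identity {G : Type*} [Group G] (a b : G)
    (h : a*b*a⁻¹*b*a*b⁻¹*b⁻¹*a⁻¹*b = 1) (k : ℕ) :
    (a*b*a⁻¹*b)⁻¹ * (a*b*a⁻¹*b^k*a⁻¹*(b⁻¹)^k) * (a*b*a⁻¹*b) *
      (b^(k+2)*a⁻¹*(b⁻¹)^(k+1)*a*b⁻¹*a⁻¹)⁻¹ = 1 := by
  have h1 : (a*b*a⁻¹)*b = b⁻¹*((a*b*a⁻¹)*(a*b*a⁻¹)) := by
    calc (a*b*a⁻¹)*b
        = (a*b*a⁻¹*b*a*b⁻¹*b⁻¹*a⁻¹*b)*(b⁻¹*((a*b*a⁻¹)*(a*b*a⁻¹))) := by group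
      _ = 1*(b⁻¹*((a*b*a⁻¹)*(a*b*a⁻¹))) := by rw [h]
      _ = b⁻¹*((a*b*a⁻¹)*(a*b*a⁻¹)) := one_mul _
  set t := a*b*a⁻¹ with htdef
  have h2 : t*t*b⁻¹ = b*t := by
    calc t*t*b⁻¹ = b*(b⁻¹*(t*t))*b⁻¹ := by group
      _ = b*(t*b)*b⁻¹ := by rw [← h1]
      _ = b*t := by group
  have hc : (t*t*t)*b = b*(t*t*t) := by
    calc t*t*t*b = (t*t)*(t*b) := by group
      _ = (t*t)*(b⁻¹*(t*t)) := by rw [h1]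
      _ = (t*t*b⁻¹)*(t*t) := by group
      _ = (b*t)*(t*t) := by rw [h2]
      _ = b*(t*t*t) := by group
  have hck : ∀ n : ℕ, (t*t*t)*b^n = b^n*(t*t*t) := by
    intro n
    induction n with
    | zero => group
    | succ n ih =>
        calc (t*t*t)*b^(n+1) = ((t*t*t)*b^n)*b := by rw [pow_succ]; group
          _ = (b^n*(t*t*t))*b := by rw [ih]
          _ = b^n*((t*t*t)*b) := by group
          _ = b^n*(b*(t*t*t)) := by rw [hc]
          _ = b^(n+1)*(t*t*t) := by rw [pow_succ]; group
  have hbk : ∀ n : ℕ, b*b^n = b^n*b := fun n => ((Commute.refl b).pow_right n).eq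
  have hconj : a⁻¹*(t*t*t)*a = b*b*b := by rw [htdef]; group
  simp only [inv_pow, pow_succ]
  -- now goal in terms of b^k
  calc (t*b)⁻¹ * (t*b^k*a⁻¹*(b^k)⁻¹) * (t*b) * (b^k*b*b*a⁻¹*((b^k)⁻¹*b⁻¹)*a*b⁻¹*a⁻¹)⁻¹
      = b⁻¹*b^k*a⁻¹*(b^k)⁻¹*((t*b)*t)*b^k*b*a*b⁻¹*b⁻¹*(b^k)⁻¹ := by rw [htdef]; group
    _ = b⁻¹*b^k*a⁻¹*(b^k)⁻¹*((b⁻¹*(t*t))*t)*b^k*b*a*b⁻¹*b⁻¹*(b^k)⁻¹ := by rw [h1]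
    _ = b⁻¹*b^k*a⁻¹*(b^k)⁻¹*b⁻¹*((t*t*t)*b^k)*b*a*b⁻¹*b⁻¹*(b^k)⁻¹ := by group
    _ = b⁻¹*b^k*a⁻¹*(b^k)⁻¹*b⁻¹*(b^k*(t*t*t))*b*a*b⁻¹*b⁻¹*(b^k)⁻¹ := by rw [hck k]
    _ = b⁻¹*b^k*a⁻¹*(b^k)⁻¹*b⁻¹*b^k*((t*t*t)*b)*a*b⁻¹*b⁻¹*(b^k)⁻¹ := by group
    _ = b⁻¹*b^k*a⁻¹*(b^k)⁻¹*b⁻¹*b^k*(b*(t*t*t))*a*b⁻¹*b⁻¹*(b^k)⁻¹ := by rw [hc]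
    _ = b⁻¹*b^k*a⁻¹*(b^k)⁻¹*(b⁻¹*(b^k*b))*(t*t*t)*a*b⁻¹*b⁻¹*(b^k)⁻¹ := by group
    _ = b⁻¹*b^k*a⁻¹*(b^k)⁻¹*(b⁻¹*(b*b^k))*(t*t*t)*a*b⁻¹*b⁻¹*(b^k)⁻¹ := by rw [hbk k]
    _ = b⁻¹*b^k*(a⁻¹*(t*t*t)*a)*b⁻¹*b⁻¹*(b^k)⁻¹ := by group
    _ = b⁻¹*b^k*(b*b*b)*b⁻¹*b⁻¹*(b^k)⁻¹ := by rw [hconj]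
    _ = b⁻¹*(b^k*b)*(b^k)⁻¹ := by group
    _ = b⁻¹*(b*b^k)*(b^k)⁻¹ := by rw [hbk k]
    _ = 1 := by group

/-- c⁻¹ u c (u')⁻¹ ∈ ⟨⟨x y x⁻¹ y x y⁻¹ y⁻¹ x⁻¹ y⟩⟩ where c = x y x⁻¹ y,
u = x y x⁻¹ y^k x⁻¹ y⁻^k, u' = y^{k+2} x⁻¹ y⁻^{k+1} x y⁻¹ x⁻¹, for k ≥ 1. -/
theorem stmt_6 (k : ℕ) (hk : 1 ≤ k) :
    (x * y * x⁻¹ * y)⁻¹ * (x * y * x⁻¹ * y ^ k * x⁻¹ * (y⁻¹) ^ k) *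
        (x * y * x⁻¹ * y) *
        (y ^ (k + 2) * x⁻¹ * (y⁻¹) ^ (k + 1) * x * y⁻¹ * x⁻¹)⁻¹ ∈
      Subgroup.normalClosure
        ({x * y * x⁻¹ * y * x * y⁻¹ * y⁻¹ * x⁻¹ * y} : Set F₂) := by
  set N := Subgroup.normalClosure
      ({x * y * x⁻¹ * y * x * y⁻¹ * y⁻¹ * x⁻¹ * y} : Set F₂) with hN
  rw [← QuotientGroup.eq_one_iff]
  have hv : ((x * y * x⁻¹ * y * x * y⁻¹ * y⁻¹ * x⁻¹ * y : F₂) : F₂ ⧸ N) = 1 := by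
    rw [QuotientGroup.eq_one_iff]
    exact Subgroup.subset_normalClosure rfl
  push_cast at hv ⊢
  exact key_identity ((x : F₂) : F₂ ⧸ N) ((y : F₂) : F₂ ⧸ N) hv k
end

section
/- In the free group F(x,y), the element c⁻¹ · u · c · (u')⁻¹, where c = y^{-(k-1)} x y^{-(k-1)} x y⁻¹ y⁻¹ x⁻¹ y, u = x^k y^{-(k+1)}, and u' = y⁻¹ x y y x⁻¹ y⁻¹ x y⁻¹ x⁻¹, lies in the normal closure of v = x y x⁻¹ y^k x⁻¹ y^{-k}, for every integer k ≥ 2. -/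
theorem key_word {G : Type*} [Group G] (A B P Q : G)
    (h1 : A * B * A⁻¹ = P * A * P⁻¹)
    (h2 : A * B⁻¹ * A⁻¹ = P * A⁻¹ * P⁻¹)
    (hE2 : A * P⁻¹ * A⁻¹ = P * Q⁻¹ * P⁻¹)
    (hPB : P * B = B * P) :
    (Q * (B⁻¹ * P⁻¹)) * ((B * P⁻¹) * A * (B * P⁻¹) * A * B⁻¹ * B⁻¹ * A⁻¹ * B)
      = ((B * P⁻¹) * A * (B * P⁻¹) * A * B⁻¹ * B⁻¹ * A⁻¹ * B)
        * (B⁻¹ * A * B * B * A⁻¹ * B⁻¹ * A * B⁻¹ * A⁻¹) := by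
  have hc : P⁻¹ * B = B * P⁻¹ := by
    calc P⁻¹ * B = P⁻¹ * (B * P) * P⁻¹ := by group
    _ = P⁻¹ * (P * B) * P⁻¹ := by rw [hPB]
    _ = B * P⁻¹ := by group
  have hc2 : P⁻¹ * B⁻¹ = B⁻¹ * P⁻¹ := by
    calc P⁻¹ * B⁻¹ = B⁻¹ * (B * P⁻¹) * B⁻¹ := by group
    _ = B⁻¹ * (P⁻¹ * B) * B⁻¹ := by rw [hc]
    _ = B⁻¹ * P⁻¹ := by group
  have h2' : A * B⁻¹ * B⁻¹ * A⁻¹ = P * A⁻¹ * A⁻¹ * P⁻¹ := by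
    calc A * B⁻¹ * B⁻¹ * A⁻¹ = (A * B⁻¹ * A⁻¹) * (A * B⁻¹ * A⁻¹) := by group
    _ = (P * A⁻¹ * P⁻¹) * (P * A⁻¹ * P⁻¹) := by rw [h2]
    _ = P * A⁻¹ * A⁻¹ * P⁻¹ := by group
  have hL : (Q * (B⁻¹ * P⁻¹)) * ((B * P⁻¹) * A * (B * P⁻¹) * A * B⁻¹ * B⁻¹ * A⁻¹ * B)
      = B * P⁻¹ * P⁻¹ := by
    calc (Q * (B⁻¹ * P⁻¹)) * ((B * P⁻¹) * A * (B * P⁻¹) * A * B⁻¹ * B⁻¹ * A⁻¹ * B)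
        = Q * B⁻¹ * (P⁻¹ * B) * P⁻¹ * A * B * P⁻¹ * (A * B⁻¹ * B⁻¹ * A⁻¹) * B := by
          group
      _ = Q * B⁻¹ * (B * P⁻¹) * P⁻¹ * A * B * P⁻¹ * (P * A⁻¹ * A⁻¹ * P⁻¹) * B := by
          rw [hc, h2']
      _ = Q * P⁻¹ * P⁻¹ * (A * B * A⁻¹) * A⁻¹ * P⁻¹ * B := by group
      _ = Q * P⁻¹ * P⁻¹ * (P * A * P⁻¹) * A⁻¹ * P⁻¹ * B := by rw [h1]
      _ = Q * P⁻¹ * (A * P⁻¹ * A⁻¹) * P⁻¹ * B := by group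
      _ = Q * P⁻¹ * (P * Q⁻¹ * P⁻¹) * P⁻¹ * B := by rw [hE2]
      _ = P⁻¹ * (P⁻¹ * B) := by group
      _ = P⁻¹ * (B * P⁻¹) := by rw [hc]
      _ = (P⁻¹ * B) * P⁻¹ := by group
      _ = B * P⁻¹ * P⁻¹ := by rw [hc]
  have hR : ((B * P⁻¹) * A * (B * P⁻¹) * A * B⁻¹ * B⁻¹ * A⁻¹ * B)
        * (B⁻¹ * A * B * B * A⁻¹ * B⁻¹ * A * B⁻¹ * A⁻¹)
      = B * P⁻¹ * P⁻¹ := by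
    calc ((B * P⁻¹) * A * (B * P⁻¹) * A * B⁻¹ * B⁻¹ * A⁻¹ * B)
        * (B⁻¹ * A * B * B * A⁻¹ * B⁻¹ * A * B⁻¹ * A⁻¹)
        = B * P⁻¹ * A * B * (P⁻¹ * B⁻¹) * A * B⁻¹ * A⁻¹ := by group
      _ = B * P⁻¹ * A * B * (B⁻¹ * P⁻¹) * A * B⁻¹ * A⁻¹ := by rw [hc2]
      _ = B * P⁻¹ * A * P⁻¹ * (A * B⁻¹ * A⁻¹) := by group
      _ = B * P⁻¹ * A * P⁻¹ * (P * A⁻¹ * P⁻¹) := by rw [h2]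
      _ = B * P⁻¹ * P⁻¹ := by group
  rw [hL, hR]

theorem key2 {G : Type*} [Group G] (A B : G) (n : ℕ)
    (hv : A * B * A⁻¹ * B ^ (n + 2) * A⁻¹ * (B⁻¹) ^ (n + 2) = 1) :
    ((B⁻¹) ^ (n + 1) * A * (B⁻¹) ^ (n + 1) * A * B⁻¹ * B⁻¹ * A⁻¹ * B)⁻¹ *
      (A ^ (n + 2) * (B⁻¹) ^ (n + 3)) *
      ((B⁻¹) ^ (n + 1) * A * (B⁻¹) ^ (n + 1) * A * B⁻¹ * B⁻¹ * A⁻¹ * B) *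
      (B⁻¹ * A * B * B * A⁻¹ * B⁻¹ * A * B⁻¹ * A⁻¹)⁻¹ = 1 := by
  set P : G := B ^ (n + 2) with hP
  set Q : G := A ^ (n + 2) with hQ
  have hBP : (B⁻¹) ^ (n + 2) = P⁻¹ := by rw [inv_pow, hP]
  have hv' : A * B * A⁻¹ * P * A⁻¹ * P⁻¹ = 1 := by rw [← hBP]; exact hv
  have h1 : A * B * A⁻¹ = P * A * P⁻¹ := by
    calc A * B * A⁻¹ = (A * B * A⁻¹ * P * A⁻¹ * P⁻¹) * (P * A * P⁻¹) := by group
    _ = 1 * (P * A * P⁻¹) := by rw [hv']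
    _ = P * A * P⁻¹ := one_mul _
  have h2 : A * B⁻¹ * A⁻¹ = P * A⁻¹ * P⁻¹ := by
    calc A * B⁻¹ * A⁻¹ = (A * B * A⁻¹)⁻¹ := by group
    _ = (P * A * P⁻¹)⁻¹ := by rw [h1]
    _ = P * A⁻¹ * P⁻¹ := by group
  have hE2 : A * P⁻¹ * A⁻¹ = P * Q⁻¹ * P⁻¹ := by
    calc A * P⁻¹ * A⁻¹ = A * (B⁻¹) ^ (n + 2) * A⁻¹ := by rw [hBP]
    _ = (A * B⁻¹ * A⁻¹) ^ (n + 2) := conj_pow.symm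
    _ = (P * A⁻¹ * P⁻¹) ^ (n + 2) := by rw [h2]
    _ = P * (A⁻¹) ^ (n + 2) * P⁻¹ := conj_pow
    _ = P * Q⁻¹ * P⁻¹ := by rw [inv_pow, hQ]
  have hPB : P * B = B * P := by rw [hP, ← pow_succ, ← pow_succ']
  have hc : P⁻¹ * B = B * P⁻¹ := by
    calc P⁻¹ * B = P⁻¹ * (B * P) * P⁻¹ := by group
    _ = P⁻¹ * (P * B) * P⁻¹ := by rw [hPB]
    _ = B * P⁻¹ := by group
  have hc2 : P⁻¹ * B⁻¹ = B⁻¹ * P⁻¹ := by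
    calc P⁻¹ * B⁻¹ = B⁻¹ * (B * P⁻¹) * B⁻¹ := by group
    _ = B⁻¹ * (P⁻¹ * B) * B⁻¹ := by rw [hc]
    _ = B⁻¹ * P⁻¹ := by group
  have e1 : (B⁻¹) ^ (n + 1) = B * P⁻¹ := by
    calc (B⁻¹) ^ (n + 1) = (B⁻¹) ^ (n + 1 + 1) * B := by rw [pow_succ]; group
    _ = P⁻¹ * B := by rw [show n + 1 + 1 = n + 2 from rfl, hBP]
    _ = B * P⁻¹ := hc
  have e3 : (B⁻¹) ^ (n + 3) = B⁻¹ * P⁻¹ := by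
    calc (B⁻¹) ^ (n + 3) = (B⁻¹) ^ (n + 2) * B⁻¹ := pow_succ _ _
    _ = P⁻¹ * B⁻¹ := by rw [hBP]
    _ = B⁻¹ * P⁻¹ := hc2
  rw [e1, e3]
  have hw := key_word A B P Q h1 h2 hE2 hPB
  calc (B * P⁻¹ * A * (B * P⁻¹) * A * B⁻¹ * B⁻¹ * A⁻¹ * B)⁻¹ * (Q * (B⁻¹ * P⁻¹)) *
      (B * P⁻¹ * A * (B * P⁻¹) * A * B⁻¹ * B⁻¹ * A⁻¹ * B) *
      (B⁻¹ * A * B * B * A⁻¹ * B⁻¹ * A * B⁻¹ * A⁻¹)⁻¹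
      = (B * P⁻¹ * A * (B * P⁻¹) * A * B⁻¹ * B⁻¹ * A⁻¹ * B)⁻¹ *
        ((Q * (B⁻¹ * P⁻¹)) * ((B * P⁻¹) * A * (B * P⁻¹) * A * B⁻¹ * B⁻¹ * A⁻¹ * B)) *
        (B⁻¹ * A * B * B * A⁻¹ * B⁻¹ * A * B⁻¹ * A⁻¹)⁻¹ := by group
    _ = (B * P⁻¹ * A * (B * P⁻¹) * A * B⁻¹ * B⁻¹ * A⁻¹ * B)⁻¹ *
        (((B * P⁻¹) * A * (B * P⁻¹) * A * B⁻¹ * B⁻¹ * A⁻¹ * B) *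
          (B⁻¹ * A * B * B * A⁻¹ * B⁻¹ * A * B⁻¹ * A⁻¹)) *
        (B⁻¹ * A * B * B * A⁻¹ * B⁻¹ * A * B⁻¹ * A⁻¹)⁻¹ := by rw [hw]
    _ = 1 := by group

/-- c⁻¹ u c (u')⁻¹ ∈ ⟨⟨x y x⁻¹ y^k x⁻¹ y⁻^k⟩⟩ where
c = y⁻^{k-1} x y⁻^{k-1} x y⁻¹ y⁻¹ x⁻¹ y, u = x^k y⁻^{k+1},
u' = y⁻¹ x y y x⁻¹ y⁻¹ x y⁻¹ x⁻¹, for k ≥ 2. -/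
theorem stmt_7 (k : ℕ) (hk : 2 ≤ k) :
    ((y⁻¹) ^ (k - 1) * x * (y⁻¹) ^ (k - 1) * x * y⁻¹ * y⁻¹ * x⁻¹ * y)⁻¹ *
        (x ^ k * (y⁻¹) ^ (k + 1)) *
        ((y⁻¹) ^ (k - 1) * x * (y⁻¹) ^ (k - 1) * x * y⁻¹ * y⁻¹ * x⁻¹ * y) *
        (y⁻¹ * x * y * y * x⁻¹ * y⁻¹ * x * y⁻¹ * x⁻¹)⁻¹ ∈
      Subgroup.normalClosure
        ({x * y * x⁻¹ * y ^ k * x⁻¹ * (y⁻¹) ^ k} : Set F₂) := by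
  obtain ⟨n, rfl⟩ : ∃ n, k = n + 2 := ⟨k - 2, by omega⟩
  rw [show n + 2 - 1 = n + 1 from rfl]
  rw [← QuotientGroup.eq_one_iff]
  have hv : (QuotientGroup.mk (x * y * x⁻¹ * y ^ (n + 2) * x⁻¹ * (y⁻¹) ^ (n + 2)) :
      F₂ ⧸ Subgroup.normalClosure
        ({x * y * x⁻¹ * y ^ (n + 2) * x⁻¹ * (y⁻¹) ^ (n + 2)} : Set F₂)) = 1 :=
    (QuotientGroup.eq_one_iff _).mpr
      (Subgroup.subset_normalClosure (Set.mem_singleton _))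
  simp only [QuotientGroup.mk_mul, QuotientGroup.mk_inv, QuotientGroup.mk_pow] at hv ⊢
  exact key2 _ _ n hv
end

section
/- In the one-relator group ⟨x, y | x^k = y^{k+1}⟩, the elements x y x y⁻¹ x⁻¹ y⁻¹ and y^k x y^{-k} x y⁻¹ x⁻¹ are conjugate via y^{-k}; equivalently, in the free group F(x,y), the element (y^{-k})⁻¹ · (x y x y⁻¹ x⁻¹ y⁻¹) · y^{-k} · (y^k x y^{-k} x y⁻¹ x⁻¹)⁻¹ lies in the normal closure of x^k y^{-(k+1)}, for every integer k ≥ 1. -/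
/-- If `a ^ k = b ^ (k + 1)`, then `z = a ^ k` commutes with `a` and `b` and `b ^ k = z * b⁻¹`, so
conjugating by `b ^ k` is conjugating by `b⁻¹` up to the central factor `z`. -/
lemma conj_pow_eq_of_pow_eq_pow_succ {G : Type*} [Group G] {a b : G} {k : ℕ}
    (h : a ^ k = b ^ (k + 1)) :
    b ^ k * (a * b * a * b⁻¹ * a⁻¹ * b⁻¹) * (b ^ k)⁻¹ = b ^ k * a * (b ^ k)⁻¹ * a * b⁻¹ * a⁻¹ := by
  set z := a ^ k
  have hza : Commute z a := (Commute.self_pow a k).symm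
  have hzb : Commute z b := h ▸ (Commute.self_pow b (k + 1)).symm
  have hbk : b ^ k = z * b⁻¹ := by rw [h, pow_succ, mul_inv_cancel_right]
  have hzw : Commute z⁻¹ (a * b⁻¹ * a⁻¹) :=
    ((hza.mul_right hzb.inv_right).mul_right hza.inv_right).inv_left
  rw [hbk]
  calc z * b⁻¹ * (a * b * a * b⁻¹ * a⁻¹ * b⁻¹) * (z * b⁻¹)⁻¹
      = z * b⁻¹ * a * b * (a * b⁻¹ * a⁻¹ * z⁻¹) := by group
    _ = z * b⁻¹ * a * b * (z⁻¹ * (a * b⁻¹ * a⁻¹)) := by rw [hzw.eq]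
    _ = z * b⁻¹ * a * (z * b⁻¹)⁻¹ * a * b⁻¹ * a⁻¹ := by group

theorem stmt_8_general (k : ℕ) :
    ((y⁻¹) ^ k)⁻¹ * (x * y * x * y⁻¹ * x⁻¹ * y⁻¹) * (y⁻¹) ^ k *
        (y ^ k * x * (y⁻¹) ^ k * x * y⁻¹ * x⁻¹)⁻¹ ∈
      Subgroup.normalClosure ({x ^ k * (y⁻¹) ^ (k + 1)} : Set F₂) := by
  set N := Subgroup.normalClosure ({x ^ k * (y⁻¹) ^ (k + 1)} : Set F₂)
  have hrel : (x : F₂ ⧸ N) ^ k = (y : F₂ ⧸ N) ^ (k + 1) := by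
    have h : ((x ^ k * (y⁻¹) ^ (k + 1) : F₂) : F₂ ⧸ N) = 1 :=
      (QuotientGroup.eq_one_iff _).2 (Subgroup.subset_normalClosure rfl)
    simpa only [QuotientGroup.mk_mul, QuotientGroup.mk_pow, QuotientGroup.mk_inv, inv_pow,
      mul_inv_eq_one] using h
  rw [← QuotientGroup.eq_one_iff]
  simpa only [QuotientGroup.mk_mul, QuotientGroup.mk_pow, QuotientGroup.mk_inv, inv_pow,
    inv_inv, mul_inv_eq_one] using conj_pow_eq_of_pow_eq_pow_succ hrel

/-- c⁻¹ u c (u')⁻¹ ∈ ⟨⟨x^k y⁻^{k+1}⟩⟩ where c = y⁻^k, u = x y x y⁻¹ x⁻¹ y⁻¹,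
u' = y^k x y⁻^k x y⁻¹ x⁻¹, for k ≥ 1. -/
theorem stmt_8 (k : ℕ) (hk : 1 ≤ k) :
    ((y⁻¹) ^ k)⁻¹ * (x * y * x * y⁻¹ * x⁻¹ * y⁻¹) * (y⁻¹) ^ k *
        (y ^ k * x * (y⁻¹) ^ k * x * y⁻¹ * x⁻¹)⁻¹ ∈
      Subgroup.normalClosure ({x ^ k * (y⁻¹) ^ (k + 1)} : Set F₂) :=
  stmt_8_general k
end

section
/- In the free group F(x,y), the element c⁻¹ · u · c · (u')⁻¹, where c = x^{k-3} (y⁻¹ x⁻¹)^k y⁻¹, u = x^{k-1} y x^{-(k-1)} y x⁻¹ y⁻¹, and u' = x^{k-1} (y⁻¹ x⁻¹)^k y⁻¹, lies in the normal closure of v = x x y x⁻¹ y⁻¹ x⁻¹ y, for every integer k ≥ 3. -/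
lemma aux_key {G : Type*} [Group G] (a b : G)
    (hr : a * a * b * a⁻¹ * b⁻¹ * a⁻¹ * b = 1) (n : ℕ) :
    a * a * b * (a⁻¹) ^ n * b * a⁻¹ * b⁻¹ * a⁻¹ * a⁻¹ = (b⁻¹ * a⁻¹) ^ (n + 1) * b⁻¹ := by
  have h1 : a * a * b * a⁻¹ = b⁻¹ * a * b := by
    calc a * a * b * a⁻¹ = (a * a * b * a⁻¹ * b⁻¹ * a⁻¹ * b) * (b⁻¹ * a * b) := by group
    _ = 1 * (b⁻¹ * a * b) := by rw [hr]
    _ = b⁻¹ * a * b := one_mul _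
  have hsq : b⁻¹ * (a * a) * b = a * a * b * a * b * a⁻¹ := by
    have e : b⁻¹ * (a * a) * b = (b⁻¹ * a * b) * (b⁻¹ * a * b) := by group
    rw [e, ← h1]; group
  induction n with
  | zero =>
    have e3 : a * b * a * b = a⁻¹ * (b⁻¹ * (a * a) * b) * a := by rw [hsq]; group
    calc a * a * b * (a⁻¹) ^ 0 * b * a⁻¹ * b⁻¹ * a⁻¹ * a⁻¹
        = (a * a * b * a⁻¹) * (a * b * a⁻¹ * b⁻¹ * a⁻¹ * a⁻¹) := by group
      _ = (b⁻¹ * a * b) * (a * b * a⁻¹ * b⁻¹ * a⁻¹ * a⁻¹) := by rw [h1]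
      _ = b⁻¹ * (a * b * a * b) * (a⁻¹ * b⁻¹ * a⁻¹ * a⁻¹) := by group
      _ = b⁻¹ * (a⁻¹ * (b⁻¹ * (a * a) * b) * a) * (a⁻¹ * b⁻¹ * a⁻¹ * a⁻¹) := by rw [e3]
      _ = (b⁻¹ * a⁻¹) ^ (0 + 1) * b⁻¹ := by group
  | succ n ih =>
    calc a * a * b * (a⁻¹) ^ (n + 1) * b * a⁻¹ * b⁻¹ * a⁻¹ * a⁻¹
        = (a * a * b * a⁻¹) * ((a⁻¹) ^ n * b * a⁻¹ * b⁻¹ * a⁻¹ * a⁻¹) := by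
          rw [pow_succ']; group
      _ = (b⁻¹ * a * b) * ((a⁻¹) ^ n * b * a⁻¹ * b⁻¹ * a⁻¹ * a⁻¹) := by rw [h1]
      _ = (b⁻¹ * a⁻¹) * (a * a * b * (a⁻¹) ^ n * b * a⁻¹ * b⁻¹ * a⁻¹ * a⁻¹) := by group
      _ = (b⁻¹ * a⁻¹) * ((b⁻¹ * a⁻¹) ^ (n + 1) * b⁻¹) := by rw [ih]
      _ = (b⁻¹ * a⁻¹) ^ (n + 1 + 1) * b⁻¹ := by rw [pow_succ' _ (n+1)]; group

lemma aux_main {G : Type*} [Group G] (a b : G)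
    (hr : a * a * b * a⁻¹ * b⁻¹ * a⁻¹ * b = 1) (m : ℕ) :
    (a ^ m * (b⁻¹ * a⁻¹) ^ (m + 3) * b⁻¹)⁻¹ *
        (a ^ (m + 2) * b * (a⁻¹) ^ (m + 2) * b * a⁻¹ * b⁻¹) *
        (a ^ m * (b⁻¹ * a⁻¹) ^ (m + 3) * b⁻¹) *
        (a ^ (m + 2) * (b⁻¹ * a⁻¹) ^ (m + 3) * b⁻¹)⁻¹ = 1 := by
  have hU : a ^ (m + 2) * b * (a⁻¹) ^ (m + 2) * b * a⁻¹ * b⁻¹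
      = a ^ m * ((b⁻¹ * a⁻¹) ^ (m + 3) * b⁻¹) * (a * a) := by
    have hk := aux_key a b hr (m + 2)
    calc a ^ (m + 2) * b * (a⁻¹) ^ (m + 2) * b * a⁻¹ * b⁻¹
        = a ^ m * (a * a * b * (a⁻¹) ^ (m + 2) * b * a⁻¹ * b⁻¹ * a⁻¹ * a⁻¹) * (a * a) := by
          rw [pow_add]; group
      _ = a ^ m * ((b⁻¹ * a⁻¹) ^ (m + 2 + 1) * b⁻¹) * (a * a) := by rw [hk]
      _ = a ^ m * ((b⁻¹ * a⁻¹) ^ (m + 3) * b⁻¹) * (a * a) := by ring_nf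
  rw [hU]
  group

/-- c⁻¹ u c (u')⁻¹ ∈ ⟨⟨x x y x⁻¹ y⁻¹ x⁻¹ y⟩⟩ where c = x^{k-3} (y⁻¹ x⁻¹)^k y⁻¹,
u = x^{k-1} y x⁻^{k-1} y x⁻¹ y⁻¹, u' = x^{k-1} (y⁻¹ x⁻¹)^k y⁻¹, for k ≥ 3. -/
theorem stmt_9 (k : ℕ) (hk : 3 ≤ k) :
    (x ^ (k - 3) * (y⁻¹ * x⁻¹) ^ k * y⁻¹)⁻¹ *
        (x ^ (k - 1) * y * (x⁻¹) ^ (k - 1) * y * x⁻¹ * y⁻¹) *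
        (x ^ (k - 3) * (y⁻¹ * x⁻¹) ^ k * y⁻¹) *
        (x ^ (k - 1) * (y⁻¹ * x⁻¹) ^ k * y⁻¹)⁻¹ ∈
      Subgroup.normalClosure
        ({x * x * y * x⁻¹ * y⁻¹ * x⁻¹ * y} : Set F₂) := by
  obtain ⟨m, rfl⟩ : ∃ m, k = m + 3 := ⟨k - 3, by omega⟩
  have h3 : m + 3 - 3 = m := by omega
  have h1 : m + 3 - 1 = m + 2 := by omega
  rw [h3, h1]
  have hv : x * x * y * x⁻¹ * y⁻¹ * x⁻¹ * y ∈
      Subgroup.normalClosure ({x * x * y * x⁻¹ * y⁻¹ * x⁻¹ * y} : Set F₂) :=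
    Subgroup.subset_normalClosure rfl
  rw [← QuotientGroup.eq_one_iff]
  have hr := (QuotientGroup.eq_one_iff _).mpr hv
  simp only [QuotientGroup.mk_mul, QuotientGroup.mk_inv, QuotientGroup.mk_pow] at hr ⊢
  exact aux_main _ _ hr m
end

section
/- In the free group F(x,y), the element c⁻¹ · u · c · (u')⁻¹, where c = x y x^{-(k-1)} y x⁻¹ y⁻¹ x⁻¹ y, u = x^k y^{-(k+1)}, and u' = y⁻¹ x y x y⁻¹ x⁻¹ x⁻¹, lies in the normal closure of v = x^{k-1} y x^{-(k-1)} y x⁻¹ y⁻¹, for every integer k ≥ 2. -/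
/-- c⁻¹ u c (u')⁻¹ ∈ ⟨⟨x^{k-1} y x⁻^{k-1} y x⁻¹ y⁻¹⟩⟩ where
c = x y x⁻^{k-1} y x⁻¹ y⁻¹ x⁻¹ y, u = x^k y⁻^{k+1},
u' = y⁻¹ x y x y⁻¹ x⁻¹ x⁻¹, for k ≥ 2. -/
theorem stmt_10 (k : ℕ) (hk : 2 ≤ k) :
    (x * y * (x⁻¹) ^ (k - 1) * y * x⁻¹ * y⁻¹ * x⁻¹ * y)⁻¹ *
        (x ^ k * (y⁻¹) ^ (k + 1)) *
        (x * y * (x⁻¹) ^ (k - 1) * y * x⁻¹ * y⁻¹ * x⁻¹ * y) *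
        (y⁻¹ * x * y * x * y⁻¹ * x⁻¹ * x⁻¹)⁻¹ ∈
      Subgroup.normalClosure
        ({x ^ (k - 1) * y * (x⁻¹) ^ (k - 1) * y * x⁻¹ * y⁻¹} : Set F₂) := by
  set N := Subgroup.normalClosure
      ({x ^ (k - 1) * y * (x⁻¹) ^ (k - 1) * y * x⁻¹ * y⁻¹} : Set F₂) with hN
  apply (QuotientGroup.eq_one_iff _).mp
  have hv : ((QuotientGroup.mk' N) (x ^ (k - 1) * y * (x⁻¹) ^ (k - 1) * y * x⁻¹ * y⁻¹)) = 1 := by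
    apply (QuotientGroup.eq_one_iff _).mpr
    exact Subgroup.subset_normalClosure (Set.mem_singleton _)
  show ((QuotientGroup.mk' N)
      ((x * y * (x⁻¹) ^ (k - 1) * y * x⁻¹ * y⁻¹ * x⁻¹ * y)⁻¹ *
        (x ^ k * (y⁻¹) ^ (k + 1)) *
        (x * y * (x⁻¹) ^ (k - 1) * y * x⁻¹ * y⁻¹ * x⁻¹ * y) *
        (y⁻¹ * x * y * x * y⁻¹ * x⁻¹ * x⁻¹)⁻¹)) = 1
  simp only [map_mul, map_inv, map_pow, inv_pow] at hv ⊢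
  set a := (QuotientGroup.mk' N) x with ha
  set b := (QuotientGroup.mk' N) y with hb
  set t := a ^ (k - 1) with ht
  -- hv : t * b * t⁻¹ * b * a⁻¹ * b⁻¹ = 1
  have h1 : t * b * t⁻¹ = b * a * b⁻¹ := by
    calc t * b * t⁻¹ = (t * b * t⁻¹ * b * a⁻¹ * b⁻¹) * (b * a * b⁻¹) := by group
      _ = 1 * (b * a * b⁻¹) := by rw [hv]
      _ = b * a * b⁻¹ := one_mul _
  have hca : t * a * t⁻¹ = a := by
    have h := ((Commute.refl a).pow_right (k - 1)).eq
    rw [ht, ← h]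
    group
  have e1 : t * (a * b) * t⁻¹ = a * (b * a * b⁻¹) := by
    calc t * (a * b) * t⁻¹ = (t * a * t⁻¹) * (t * b * t⁻¹) := by group
      _ = a * (b * a * b⁻¹) := by rw [hca, h1]
  have h2 : t * b⁻¹ * t⁻¹ = b * a⁻¹ * b⁻¹ := by
    calc t * b⁻¹ * t⁻¹ = (t * b * t⁻¹)⁻¹ := by group
      _ = (b * a * b⁻¹)⁻¹ := by rw [h1]
      _ = b * a⁻¹ * b⁻¹ := by group
  have h3 : t * (b⁻¹) ^ (k + 1) * t⁻¹ = b * (a⁻¹) ^ (k + 1) * b⁻¹ := by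
    rw [← conj_pow, h2, conj_pow]
  have hBB : (b⁻¹) ^ (k + 1) = t⁻¹ * (b * (a⁻¹) ^ (k + 1) * b⁻¹) * t := by
    rw [← h3]; group
  have hA' : a ^ (k + 1) = t * a * a := by
    rw [ht, ← pow_succ, ← pow_succ]
    congr 1
    omega
  have hcm : t * a = a * t := by
    calc t * a = (t * a * t⁻¹) * t := by group
      _ = a * t := by rw [hca]
  have hA : (a⁻¹) ^ (k + 1) = t⁻¹ * a⁻¹ * a⁻¹ := by
    rw [inv_pow, hA', hcm, mul_assoc a t a, hcm]
    group
  have hk1 : a ^ k = t * a := by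
    rw [ht, ← pow_succ]
    congr 1
    omega
  have key : (a ^ k * (b ^ (k + 1))⁻¹) *
      (a * b * t⁻¹ * b * a⁻¹ * b⁻¹ * a⁻¹ * b) =
      (a * b * t⁻¹ * b * a⁻¹ * b⁻¹ * a⁻¹ * b) *
      (b⁻¹ * a * b * a * b⁻¹ * a⁻¹ * a⁻¹) := by
    calc (a ^ k * (b ^ (k + 1))⁻¹) * (a * b * t⁻¹ * b * a⁻¹ * b⁻¹ * a⁻¹ * b)
        = (t * a) * (t⁻¹ * (b * (t⁻¹ * a⁻¹ * a⁻¹) * b⁻¹) * t) *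
          (a * b * t⁻¹ * b * a⁻¹ * b⁻¹ * a⁻¹ * b) := by
          rw [hk1, ← inv_pow, hBB, hA]
      _ = (t * a * t⁻¹) * (b * t⁻¹ * a⁻¹ * a⁻¹ * b⁻¹) * (t * (a * b) * t⁻¹) *
          (b * a⁻¹ * b⁻¹ * a⁻¹ * b) := by group
      _ = a * (b * t⁻¹ * a⁻¹ * a⁻¹ * b⁻¹) * (a * (b * a * b⁻¹)) *
          (b * a⁻¹ * b⁻¹ * a⁻¹ * b) := by rw [hca, e1]
      _ = (a * b * t⁻¹ * b * a⁻¹ * b⁻¹ * a⁻¹ * b) *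
          (b⁻¹ * a * b * a * b⁻¹ * a⁻¹ * a⁻¹) := by group
  calc (a * b * t⁻¹ * b * a⁻¹ * b⁻¹ * a⁻¹ * b)⁻¹ *
        (a ^ k * (b ^ (k + 1))⁻¹) *
        (a * b * t⁻¹ * b * a⁻¹ * b⁻¹ * a⁻¹ * b) *
        (b⁻¹ * a * b * a * b⁻¹ * a⁻¹ * a⁻¹)⁻¹
      = (a * b * t⁻¹ * b * a⁻¹ * b⁻¹ * a⁻¹ * b)⁻¹ *
        ((a ^ k * (b ^ (k + 1))⁻¹) * (a * b * t⁻¹ * b * a⁻¹ * b⁻¹ * a⁻¹ * b)) *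
        (b⁻¹ * a * b * a * b⁻¹ * a⁻¹ * a⁻¹)⁻¹ := by group
    _ = (a * b * t⁻¹ * b * a⁻¹ * b⁻¹ * a⁻¹ * b)⁻¹ *
        ((a * b * t⁻¹ * b * a⁻¹ * b⁻¹ * a⁻¹ * b) *
          (b⁻¹ * a * b * a * b⁻¹ * a⁻¹ * a⁻¹)) *
        (b⁻¹ * a * b * a * b⁻¹ * a⁻¹ * a⁻¹)⁻¹ := by rw [key]
    _ = 1 := by rw [inv_mul_cancel_left, mul_inv_cancel]
end

section
/- In the one-relator group ⟨x, y | x^k = y^{k+1}⟩, the element x y x y⁻¹ x⁻¹ y⁻¹ conjugated by (y x^{-(k-1)} y x⁻¹ y⁻¹)⁻¹ equals y x y⁻¹ x^{k-1} y⁻¹ x^{-(k-1)}; equivalently, in F(x,y), the word c⁻¹ u c (u')⁻¹ with c = y x^{-(k-1)} y x⁻¹ y⁻¹, u = x y x y⁻¹ x⁻¹ y⁻¹, u' = y x y⁻¹ x^{k-1} y⁻¹ x^{-(k-1)}, lies in the normal closure of x^k y^{-(k+1)}, for every integer k ≥ 2. -/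
/-- c⁻¹ u c (u')⁻¹ ∈ ⟨⟨x^k y⁻^{k+1}⟩⟩ where c = y x⁻^{k-1} y x⁻¹ y⁻¹,
u = x y x y⁻¹ x⁻¹ y⁻¹, u' = y x y⁻¹ x^{k-1} y⁻¹ x⁻^{k-1}, for k ≥ 2. -/
theorem stmt_11 (k : ℕ) (hk : 2 ≤ k) :
    (y * (x⁻¹) ^ (k - 1) * y * x⁻¹ * y⁻¹)⁻¹ *
        (x * y * x * y⁻¹ * x⁻¹ * y⁻¹) *
        (y * (x⁻¹) ^ (k - 1) * y * x⁻¹ * y⁻¹) *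
        (y * x * y⁻¹ * x ^ (k - 1) * y⁻¹ * (x⁻¹) ^ (k - 1))⁻¹ ∈
      Subgroup.normalClosure ({x ^ k * (y⁻¹) ^ (k + 1)} : Set F₂) := by
  obtain ⟨m, rfl⟩ : ∃ m, k = m + 2 := ⟨k - 2, by omega⟩
  have hk1 : m + 2 - 1 = m + 1 := by omega
  rw [hk1]
  set N := Subgroup.normalClosure ({x ^ (m + 2) * (y⁻¹) ^ (m + 2 + 1)} : Set F₂) with hNdef
  haveI hN : N.Normal := Subgroup.normalClosure_normal
  rw [← QuotientGroup.eq_one_iff]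
  have hv : x ^ (m + 2) * (y⁻¹) ^ (m + 2 + 1) ∈ N :=
    Subgroup.subset_normalClosure (Set.mem_singleton _)
  have hv1 : ((x ^ (m + 2) * (y⁻¹) ^ (m + 2 + 1) : F₂) : F₂ ⧸ N) = 1 :=
    (QuotientGroup.eq_one_iff _).2 hv
  set X : F₂ ⧸ N := ((x : F₂) : F₂ ⧸ N) with hX
  set Y : F₂ ⧸ N := ((y : F₂) : F₂ ⧸ N) with hY
  simp only [QuotientGroup.mk_mul, QuotientGroup.mk_inv, QuotientGroup.mk_pow, ← hX, ← hY] at hv1 ⊢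
  have h : X ^ (m + 2) = Y ^ (m + 3) := by
    have : X ^ (m + 2) * (Y ^ (m + 3))⁻¹ = 1 := by
      rw [← inv_pow]; exact hv1
    exact mul_inv_eq_one.mp this
  have C : Commute (X ^ (m + 2)) Y := by
    unfold Commute SemiconjBy
    rw [h]
    group
  have hcom2 : (X⁻¹) ^ (m + 2) * Y = Y * (X⁻¹) ^ (m + 2) := by
    rw [inv_pow]; exact C.inv_left
  have hcom3 : (X⁻¹) ^ (m + 2) * Y⁻¹ = Y⁻¹ * (X⁻¹) ^ (m + 2) := by
    rw [inv_pow]; exact C.inv_left.inv_right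
  have key : (X * Y * X * Y⁻¹ * X⁻¹ * Y⁻¹) * (Y * (X⁻¹) ^ (m + 1) * Y * X⁻¹ * Y⁻¹) =
      (Y * (X⁻¹) ^ (m + 1) * Y * X⁻¹ * Y⁻¹) * (Y * X * Y⁻¹ * X ^ (m + 1) * Y⁻¹ * (X⁻¹) ^ (m + 1)) := by
    calc (X * Y * X * Y⁻¹ * X⁻¹ * Y⁻¹) * (Y * (X⁻¹) ^ (m + 1) * Y * X⁻¹ * Y⁻¹)
        = (X * Y * X * Y⁻¹) * ((X⁻¹) ^ (m + 2) * Y) * (X⁻¹ * Y⁻¹) := by group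
      _ = (X * Y * X * Y⁻¹) * (Y * (X⁻¹) ^ (m + 2)) * (X⁻¹ * Y⁻¹) := by rw [hcom2]
      _ = (X * Y) * ((X⁻¹) ^ (m + 2) * Y⁻¹) := by group
      _ = (X * Y) * (Y⁻¹ * (X⁻¹) ^ (m + 2)) := by rw [hcom3]
      _ = (X⁻¹) ^ (m + 1) := by group
      _ = (Y * (X⁻¹) ^ (m + 1) * Y * X⁻¹ * Y⁻¹) * (Y * X * Y⁻¹ * X ^ (m + 1) * Y⁻¹ * (X⁻¹) ^ (m + 1)) := by
          group
  calc (Y * (X⁻¹) ^ (m + 1) * Y * X⁻¹ * Y⁻¹)⁻¹ * (X * Y * X * Y⁻¹ * X⁻¹ * Y⁻¹) *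
        (Y * (X⁻¹) ^ (m + 1) * Y * X⁻¹ * Y⁻¹) *
        (Y * X * Y⁻¹ * X ^ (m + 1) * Y⁻¹ * (X⁻¹) ^ (m + 1))⁻¹
      = (Y * (X⁻¹) ^ (m + 1) * Y * X⁻¹ * Y⁻¹)⁻¹ *
        ((X * Y * X * Y⁻¹ * X⁻¹ * Y⁻¹) * (Y * (X⁻¹) ^ (m + 1) * Y * X⁻¹ * Y⁻¹)) *
        (Y * X * Y⁻¹ * X ^ (m + 1) * Y⁻¹ * (X⁻¹) ^ (m + 1))⁻¹ := by group
    _ = (Y * (X⁻¹) ^ (m + 1) * Y * X⁻¹ * Y⁻¹)⁻¹ *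
        ((Y * (X⁻¹) ^ (m + 1) * Y * X⁻¹ * Y⁻¹) * (Y * X * Y⁻¹ * X ^ (m + 1) * Y⁻¹ * (X⁻¹) ^ (m + 1))) *
        (Y * X * Y⁻¹ * X ^ (m + 1) * Y⁻¹ * (X⁻¹) ^ (m + 1))⁻¹ := by rw [key]
    _ = 1 := by group
end

section
/- The Akbulut–Kurby presentation AK(2) presents the trivial group: the normal closure of {x² y⁻³, x y x (y x y)⁻¹} in the free group F(x,y) is all of F(x,y). -/
/-! The braid relation `aba = bab` says that `ab` conjugates `a` to `b`. The element
`a² = b³` commutes with `a` and with `b`, so it is central; conjugating it by `ab` gives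
`a² = b²`. Hence `b³ = b²`, i.e. `b = 1`, and then `a`, being conjugate to `b`, is trivial. -/

section Braid

variable {G : Type*} [Group G] {a b : G}

theorem conj_eq_of_braid (h : a * b * a = b * a * b) : (a * b) * a * (a * b)⁻¹ = b := by
  rw [mul_inv_eq_iff_eq_mul, h, mul_assoc]

theorem eq_one_of_braid_of_sq_eq_cube (h₁ : a ^ 2 = b ^ 3) (h₂ : a * b * a = b * a * b) :
    a = 1 ∧ b = 1 := by
  have hconj := conj_eq_of_braid h₂
  have hcomm : Commute (a ^ 2) (a * b) :=
    (Commute.pow_self a 2).mul_right (h₁ ▸ Commute.pow_self b 3)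
  have hsq : a ^ 2 = b ^ 2 := by
    rw [← hconj, conj_pow, hcomm.symm.eq, mul_inv_cancel_right]
  have hb : b = 1 := by
    rw [h₁, pow_succ, mul_eq_left] at hsq
    exact hsq
  refine ⟨?_, hb⟩
  rwa [hb, conj_eq_one_iff] at hconj

end Braid

theorem FreeGroup.eq_top_of_of_mem {α : Type*} {N : Subgroup (FreeGroup α)}
    (h : ∀ i, FreeGroup.of i ∈ N) : N = ⊤ :=
  top_le_iff.mp <| (FreeGroup.closure_range_of α).symm.le.trans <|
    (Subgroup.closure_le N).mpr (Set.range_subset_iff.mpr h)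

/-- AK(2) presents the trivial group:
⟨⟨{x² y⁻³, x y x (y x y)⁻¹}⟩⟩ = F(x,y). -/
theorem stmt_19 :
    Subgroup.normalClosure
        ({x ^ 2 * (y⁻¹) ^ 3, x * y * x * (y * x * y)⁻¹} : Set F₂) = ⊤ := by
  set N := Subgroup.normalClosure
    ({x ^ 2 * (y⁻¹) ^ 3, x * y * x * (y * x * y)⁻¹} : Set F₂)
  have h₁ : (x : F₂ ⧸ N) ^ 2 = (y : F₂ ⧸ N) ^ 3 := by
    rw [← QuotientGroup.mk_pow, ← QuotientGroup.mk_pow, QuotientGroup.eq_iff_div_mem,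
      div_eq_mul_inv, ← inv_pow]
    exact Subgroup.subset_normalClosure (by simp)
  have h₂ : (x : F₂ ⧸ N) * y * x = (y : F₂ ⧸ N) * x * y := by
    simp only [← QuotientGroup.mk_mul]
    rw [QuotientGroup.eq_iff_div_mem, div_eq_mul_inv]
    exact Subgroup.subset_normalClosure (by simp)
  obtain ⟨hx, hy⟩ := eq_one_of_braid_of_sq_eq_cube h₁ h₂
  refine FreeGroup.eq_top_of_of_mem (Fin.forall_fin_two.mpr ⟨?_, ?_⟩)
  · exact (QuotientGroup.eq_one_iff x).mp hx
  · exact (QuotientGroup.eq_one_iff y).mp hy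
end
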